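/- arXiv:2506.05838 — 2 statements merged into one kernel-verified Lean document; each statement's English description precedes it below -/
import Mathlib

section
/- Assume the regular domain 0 < α_0 < |α_τ|, where |α_τ| := min_{0<μ<N} |α_μ|, and set α_(c) := (Σ_{μ=1}^{N−1} |α_μ|^{−1})^{−1}. Then α_(c) < |α_τ|, and the LEC of the polygon is collinear (i.e. every global minimizer has all ψ_μ ∈ {0, π}) if and only if 0 < α_0 ≤ α_(c). -/
open Real Finset

/-- The energy of an `N`-spin polygon in the angle representation. -/
noncomputable def polygonEnergy (N : ℕ) (α ψ : ℕ → ℝ) : ℝ :=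
  α 0 * Real.cos (∑ μ ∈ Finset.Ico 1 N, ψ μ) +
    ∑ μ ∈ Finset.Ico 1 N, α μ * Real.cos (ψ μ)

/-!
Since `cos x = 1 - 2 sin² (x / 2)`, the energy of `ψ` exceeds that of the aligned configuration
`ψ = 0` by `2 (Σ |α_μ| sin² (ψ_μ / 2) - α₀ sin² (Ψ / 2))`. As `|sin (Ψ / 2)| ≤ Σ |sin (ψ_μ / 2)|`,
Cauchy–Schwarz with weights `|α_μ|⁻¹` bounds `α₀ sin² (Ψ / 2)` by
`(α₀ / α_(c)) Σ |α_μ| sin² (ψ_μ / 2)`. So for `α₀ ≤ α_(c)` the aligned configuration is the only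
minimizer: strictness comes from the strict triangle inequality for sines when two half-angles have
nonzero sine, and from `α₀ < |α_μ|` when only one does. For `α₀ > α_(c)` the small rotations
`ψ_μ ∝ |α_μ|⁻¹` lower the energy below the aligned one at second order, whereas a collinear
configuration with some `ψ_ν = π` costs at least `2 (|α_ν| - α₀) ≥ 0`; a minimizer exists by
compactness and periodicity, so it is not collinear.
-/

lemma abs_sin_add_le (a b : ℝ) : |sin (a + b)| ≤ |sin a| + |sin b| := by
  rw [sin_add]
  calc |sin a * cos b + cos a * sin b| ≤ |sin a| * |cos b| + |cos a| * |sin b| := by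
        simpa only [abs_mul] using abs_add_le (sin a * cos b) (cos a * sin b)
    _ ≤ |sin a| * 1 + 1 * |sin b| := by gcongr <;> exact abs_cos_le_one _
    _ = |sin a| + |sin b| := by ring

lemma abs_sin_add_lt {a b : ℝ} (ha : sin a ≠ 0) (hb : sin b ≠ 0) :
    |sin (a + b)| < |sin a| + |sin b| := by
  have hcos : |cos b| < 1 := by
    rw [← sq_lt_one_iff_abs_lt_one, cos_sq']
    have := pow_pos (abs_pos.2 hb) 2
    rw [sq_abs] at this
    linarith
  rw [sin_add]
  calc |sin a * cos b + cos a * sin b| ≤ |sin a| * |cos b| + |cos a| * |sin b| := by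
        simpa only [abs_mul] using abs_add_le (sin a * cos b) (cos a * sin b)
    _ < |sin a| * 1 + 1 * |sin b| :=
        add_lt_add_of_lt_of_le (mul_lt_mul_of_pos_left hcos (abs_pos.2 ha))
          (mul_le_mul_of_nonneg_right (abs_cos_le_one a) (abs_nonneg _))
    _ = |sin a| + |sin b| := by ring

lemma abs_sin_sum_le {ι : Type*} (s : Finset ι) (x : ι → ℝ) :
    |sin (∑ i ∈ s, x i)| ≤ ∑ i ∈ s, |sin (x i)| := by
  classical
  induction s using Finset.induction_on with
  | empty => simp
  | insert i s hi ih =>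
    rw [sum_insert hi, sum_insert hi]
    exact (abs_sin_add_le _ _).trans (by gcongr)

lemma abs_sin_sum_lt {ι : Type*} {s : Finset ι} {x : ι → ℝ} {i j : ι}
    (hi : i ∈ s) (hj : j ∈ s) (hij : i ≠ j) (hxi : sin (x i) ≠ 0) (hxj : sin (x j) ≠ 0) :
    |sin (∑ k ∈ s, x k)| < ∑ k ∈ s, |sin (x k)| := by
  classical
  have hpair : {i, j} ⊆ s := insert_subset hi (singleton_subset_iff.2 hj)
  rw [← sum_sdiff hpair, ← sum_sdiff hpair, sum_pair hij, sum_pair hij]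
  calc |sin (∑ k ∈ s \ {i, j}, x k + (x i + x j))|
      ≤ ∑ k ∈ s \ {i, j}, |sin (x k)| + |sin (x i + x j)| :=
        (abs_sin_add_le _ _).trans (by gcongr; exact abs_sin_sum_le _ _)
    _ < _ := by gcongr; exact abs_sin_add_lt hxi hxj

lemma mul_sin_sum_sq_lt {ι : Type*} {F : Finset ι} {w x : ι → ℝ} {a : ℝ}
    (ha : 0 < a) (hw : ∀ i ∈ F, a < w i) (hcrit : a ≤ (∑ i ∈ F, (w i)⁻¹)⁻¹)
    {i : ι} (hi : i ∈ F) (hxi : sin (x i) ≠ 0) :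
    a * sin (∑ j ∈ F, x j) ^ 2 < ∑ j ∈ F, w j * sin (x j) ^ 2 := by
  have hw0 : ∀ j ∈ F, 0 < w j := fun j hj => ha.trans (hw j hj)
  have hCS : a * (∑ j ∈ F, |sin (x j)|) ^ 2 ≤ ∑ j ∈ F, w j * sin (x j) ^ 2 :=
    calc a * (∑ j ∈ F, |sin (x j)|) ^ 2
        ≤ (∑ j ∈ F, (w j)⁻¹)⁻¹ * (∑ j ∈ F, |sin (x j)|) ^ 2 :=
          mul_le_mul_of_nonneg_right hcrit (sq_nonneg _)
      _ = (∑ j ∈ F, |sin (x j)|) ^ 2 / ∑ j ∈ F, (w j)⁻¹ := inv_mul_eq_div _ _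
      _ ≤ ∑ j ∈ F, |sin (x j)| ^ 2 / (w j)⁻¹ :=
        sq_sum_div_le_sum_sq_div _ _ fun j hj => inv_pos.2 (hw0 j hj)
      _ = ∑ j ∈ F, w j * sin (x j) ^ 2 :=
        sum_congr rfl fun j _ => by rw [div_inv_eq_mul, sq_abs, mul_comm]
  by_cases hpair : ∃ j ∈ F, j ≠ i ∧ sin (x j) ≠ 0
  · obtain ⟨j, hj, hji, hxj⟩ := hpair
    have hlt := abs_sin_sum_lt hi hj hji.symm hxi hxj
    calc a * sin (∑ j ∈ F, x j) ^ 2 < a * (∑ j ∈ F, |sin (x j)|) ^ 2 :=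
          mul_lt_mul_of_pos_left (sq_lt_sq' (abs_lt.1 hlt).1 (abs_lt.1 hlt).2) ha
      _ ≤ _ := hCS
  · push Not at hpair
    have hle : |sin (∑ j ∈ F, x j)| ≤ |sin (x i)| := (abs_sin_sum_le F x).trans_eq
      (sum_eq_single_of_mem i hi fun j hj hji => by rw [hpair j hj hji, abs_zero])
    calc a * sin (∑ j ∈ F, x j) ^ 2 ≤ a * sin (x i) ^ 2 :=
          mul_le_mul_of_nonneg_left (sq_le_sq.2 hle) ha.le
      _ < w i * sin (x i) ^ 2 := by gcongr; exact hw i hi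
      _ = ∑ j ∈ F, w j * sin (x j) ^ 2 :=
        (sum_eq_single_of_mem (f := fun j => w j * sin (x j) ^ 2) i hi
          fun j hj hji => by rw [hpair j hj hji]; ring).symm

lemma cos_le_one_sub_sq_div_two_add {x : ℝ} (hx : |x| ≤ 1) :
    cos x ≤ 1 - x ^ 2 / 2 + x ^ 4 * (5 / 96) := by
  have := (abs_le.1 (cos_bound hx)).2
  rw [Even.pow_abs ⟨2, rfl⟩] at this
  linarith

lemma sum_mul_cos_mul_inv_abs_le {ι : Type*} {F : Finset ι} {α : ι → ℝ}
    (hα : ∀ μ ∈ F, α μ < 0) (t : ℝ) :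
    ∑ μ ∈ F, α μ * cos (t * |α μ|⁻¹) ≤ ∑ μ ∈ F, α μ + t ^ 2 / 2 * ∑ μ ∈ F, |α μ|⁻¹ := by
  rw [mul_sum, ← sum_add_distrib]
  refine sum_le_sum fun μ hμ => ?_
  have hneg := hα μ hμ
  have hcos := mul_le_mul_of_nonpos_left (one_sub_sq_div_two_le_cos (x := t * |α μ|⁻¹)) hneg.le
  have : α μ * (1 - (t * |α μ|⁻¹) ^ 2 / 2) = α μ + t ^ 2 / 2 * |α μ|⁻¹ := by
    have := hneg.ne
    rw [abs_of_neg hneg]; field_simp; ring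
  linarith

lemma sin_half_ne_zero {x : ℝ} (hx : x ∈ Set.Ioc (-π) π) (hx0 : x ≠ 0) : sin (x / 2) ≠ 0 := by
  rw [Ne, sin_eq_zero_iff_of_lt_of_lt (by linarith [hx.1, pi_pos]) (by linarith [hx.2, pi_pos])]
  exact div_ne_zero hx0 two_ne_zero

lemma polygonEnergy_zero (N : ℕ) (α : ℕ → ℝ) :
    polygonEnergy N α 0 = α 0 + ∑ μ ∈ Ico 1 N, α μ := by
  simp [polygonEnergy]

lemma polygonEnergy_eq_add_sin_sq (N : ℕ) (α ψ : ℕ → ℝ) :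
    polygonEnergy N α ψ = polygonEnergy N α 0 + 2 * (∑ μ ∈ Ico 1 N, -α μ * sin (ψ μ / 2) ^ 2 -
      α 0 * sin ((∑ μ ∈ Ico 1 N, ψ μ) / 2) ^ 2) := by
  have half (x : ℝ) : sin (x / 2) ^ 2 = (1 - cos x) / 2 := by
    rw [sin_sq_eq_half_sub, mul_div_cancel₀ x two_ne_zero]; ring
  have hsum : ∑ μ ∈ Ico 1 N, -α μ * sin (ψ μ / 2) ^ 2 =
      (∑ μ ∈ Ico 1 N, α μ * cos (ψ μ) - ∑ μ ∈ Ico 1 N, α μ) / 2 := by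
    rw [← sum_sub_distrib, sum_div]
    exact sum_congr rfl fun μ _ => by rw [half]; ring
  rw [polygonEnergy_zero, polygonEnergy, hsum, half]
  ring

lemma continuous_polygonEnergy (N : ℕ) (α : ℕ → ℝ) : Continuous (polygonEnergy N α) := by
  unfold polygonEnergy
  fun_prop

lemma polygonEnergy_toIocMod (N : ℕ) (α ψ : ℕ → ℝ) (a : ℝ) :
    polygonEnergy N α (fun μ => toIocMod two_pi_pos a (ψ μ)) = polygonEnergy N α ψ := by
  simp only [← self_sub_toIocDiv_zsmul, zsmul_eq_mul, polygonEnergy, sum_sub_distrib,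
    ← sum_mul, ← Int.cast_sum, cos_sub_int_mul_two_pi]

lemma exists_forall_polygonEnergy_le (N : ℕ) (α : ℕ → ℝ) :
    ∃ ψ : ℕ → ℝ, (∀ μ, ψ μ ∈ Set.Ioc (-π) π) ∧
      ∀ φ, polygonEnergy N α ψ ≤ polygonEnergy N α φ := by
  have reduce_mem : ∀ φ : ℕ → ℝ, ∀ μ, toIocMod two_pi_pos (-π) (φ μ) ∈ Set.Ioc (-π) π :=
    fun φ μ => by
      simpa only [two_mul, neg_add_cancel_left] using toIocMod_mem_Ioc two_pi_pos (-π) (φ μ)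
  have hK := isCompact_univ_pi fun _ : ℕ => isCompact_Icc (a := -π) (b := π)
  obtain ⟨ψ, -, hψ⟩ := hK.exists_isMinOn ⟨0, fun _ _ => ⟨neg_nonpos.2 pi_pos.le, pi_pos.le⟩⟩
    (continuous_polygonEnergy N α).continuousOn
  refine ⟨_, reduce_mem ψ, fun φ => ?_⟩
  rw [polygonEnergy_toIocMod, ← polygonEnergy_toIocMod N α φ (-π)]
  exact hψ fun μ _ => Set.Ioc_subset_Icc_self (reduce_mem φ μ)

lemma polygonEnergy_zero_le_of_collinear (N : ℕ) {α ψ : ℕ → ℝ} (hα0 : 0 ≤ α 0)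
    (hreg : ∀ μ ∈ Ico 1 N, α 0 ≤ -α μ) (hψ : ∀ μ ∈ Ico 1 N, ψ μ = 0 ∨ ψ μ = π) :
    polygonEnergy N α 0 ≤ polygonEnergy N α ψ := by
  rw [polygonEnergy_eq_add_sin_sq N α ψ, le_add_iff_nonneg_right]
  have hterm : ∀ μ ∈ Ico 1 N, 0 ≤ -α μ * sin (ψ μ / 2) ^ 2 :=
    fun μ hμ => mul_nonneg (hα0.trans (hreg μ hμ)) (sq_nonneg _)
  by_cases hπ : ∃ ν ∈ Ico 1 N, ψ ν = π
  · obtain ⟨ν, hν, hψν⟩ := hπ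
    have : α 0 * sin ((∑ μ ∈ Ico 1 N, ψ μ) / 2) ^ 2 ≤ ∑ μ ∈ Ico 1 N, -α μ * sin (ψ μ / 2) ^ 2 :=
      calc α 0 * sin ((∑ μ ∈ Ico 1 N, ψ μ) / 2) ^ 2 ≤ α 0 :=
            mul_le_of_le_one_right hα0 (sin_sq_le_one _)
        _ ≤ -α ν * sin (ψ ν / 2) ^ 2 := by rw [hψν, sin_pi_div_two]; simpa using hreg ν hν
        _ ≤ _ := single_le_sum hterm hν
    linarith
  · push Not at hπ
    have hzero : ∀ μ ∈ Ico 1 N, ψ μ = 0 := fun μ hμ => (hψ μ hμ).resolve_right (hπ μ hμ)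
    rw [sum_eq_zero hzero, zero_div, sin_zero]
    linarith [sum_nonneg hterm]

noncomputable def criticalCoupling (N : ℕ) (α : ℕ → ℝ) : ℝ :=
  (∑ μ ∈ Ico 1 N, |α μ|⁻¹)⁻¹

lemma criticalCoupling_lt_abs {N : ℕ} (hN : 2 < N) {α : ℕ → ℝ}
    (hα : ∀ μ ∈ Ico 1 N, α μ ≠ 0) {τ : ℕ} (hτ : τ ∈ Ico 1 N) :
    criticalCoupling N α < |α τ| := by
  obtain ⟨ν, hν, hντ⟩ := exists_mem_ne (s := Ico 1 N) (by rw [Nat.card_Ico]; omega) τ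
  have hlt : |α τ|⁻¹ < ∑ μ ∈ Ico 1 N, |α μ|⁻¹ :=
    single_lt_sum (f := fun μ => |α μ|⁻¹) hντ hτ hν (inv_pos.2 (abs_pos.2 (hα ν hν)))
      fun μ _ _ => inv_nonneg.2 (abs_nonneg _)
  exact inv_lt_of_inv_lt₀ (abs_pos.2 (hα τ hτ)) hlt

lemma polygonEnergy_zero_lt_of_le_criticalCoupling (N : ℕ) {α ψ : ℕ → ℝ} (hα0 : 0 < α 0)
    (hreg : ∀ μ ∈ Ico 1 N, α 0 < -α μ) (hcrit : α 0 ≤ criticalCoupling N α)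
    {ν : ℕ} (hν : ν ∈ Ico 1 N) (hψν : sin (ψ ν / 2) ≠ 0) :
    polygonEnergy N α 0 < polygonEnergy N α ψ := by
  have hαF : ∀ μ ∈ Ico 1 N, |α μ| = -α μ := fun μ hμ => abs_of_neg (by linarith [hreg μ hμ])
  have hcrit' : α 0 ≤ (∑ μ ∈ Ico 1 N, (-α μ)⁻¹)⁻¹ := by
    rwa [criticalCoupling, sum_congr rfl fun μ hμ => by rw [hαF μ hμ]] at hcrit
  have key := mul_sin_sum_sq_lt (x := fun μ => ψ μ / 2) hα0 hreg hcrit' hν hψν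
  rw [← sum_div] at key
  rw [polygonEnergy_eq_add_sin_sq N α ψ]
  linarith

lemma exists_polygonEnergy_lt_zero_of_criticalCoupling_lt {N : ℕ} (hN : 1 < N) {α : ℕ → ℝ}
    (hα : ∀ μ ∈ Ico 1 N, α μ < 0) (hcrit : criticalCoupling N α < α 0) :
    ∃ ψ : ℕ → ℝ, (∀ μ ∈ Ico 1 N, ψ μ ∈ Set.Ioc (-π) π) ∧
      polygonEnergy N α ψ < polygonEnergy N α 0 := by
  set c := criticalCoupling N α
  have hS : 0 < ∑ μ ∈ Ico 1 N, |α μ|⁻¹ :=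
    sum_pos (fun μ hμ => inv_pos.2 (abs_pos.2 (hα μ hμ).ne)) ⟨1, by simp; omega⟩
  have hcS : c * ∑ μ ∈ Ico 1 N, |α μ|⁻¹ = 1 := inv_mul_cancel₀ hS.ne'
  have hc : 0 < c := inv_pos.2 hS
  have hα0 : 0 < α 0 := hc.trans hcrit
  -- With total angle `δ`, the quadratic gain `α₀ δ³ / 2` beats the quartic error `5 α₀ δ⁴ / 96`.
  set δ := 1 - c / α 0
  have hδ : 0 < δ := by rw [sub_pos, div_lt_one hα0]; exact hcrit
  have hδ1 : δ < 1 := by have := div_pos hc hα0; linarith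
  have hψ : ∀ μ ∈ Ico 1 N, 0 < δ * c * |α μ|⁻¹ ∧ δ * c * |α μ|⁻¹ ≤ δ := fun μ hμ => by
    have h1 : c * |α μ|⁻¹ ≤ 1 := (mul_le_mul_of_nonneg_left
      (single_le_sum (fun ν _ => inv_nonneg.2 (abs_nonneg (α ν))) hμ) hc.le).trans_eq hcS
    have := abs_pos.2 (hα μ hμ).ne
    exact ⟨by positivity, by rw [mul_assoc]; exact mul_le_of_le_one_right hδ.le h1⟩
  refine ⟨fun μ => δ * c * |α μ|⁻¹, fun μ hμ =>
    ⟨by linarith [pi_pos, (hψ μ hμ).1], by linarith [pi_gt_three, (hψ μ hμ).2]⟩, ?_⟩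
  have hsum : ∑ μ ∈ Ico 1 N, δ * c * |α μ|⁻¹ = δ := by rw [← mul_sum, mul_assoc, hcS, mul_one]
  have hcos0 := cos_le_one_sub_sq_div_two_add (abs_le.2 ⟨by linarith, hδ1.le⟩)
  have hcosμ := sum_mul_cos_mul_inv_abs_le hα (δ * c)
  have hc' : c = α 0 * (1 - δ) := by simp only [δ]; field_simp; ring
  have hquad : (δ * c) ^ 2 / 2 * ∑ μ ∈ Ico 1 N, |α μ|⁻¹ = δ ^ 2 * (α 0 * (1 - δ)) / 2 := by
    rw [← hc']; linear_combination (δ ^ 2 * c / 2) * hcS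
  have hgain : 0 < α 0 * δ ^ 3 * (1 / 2 - 5 / 96 * δ) := mul_pos (by positivity) (by linarith)
  rw [polygonEnergy, hsum, polygonEnergy_zero]
  linarith [mul_le_mul_of_nonneg_left hcos0 hα0.le]

/-- In the regular domain `0 < α₀ < |α_τ|` one has
`α_(c) := (Σ_{μ=1}^{N−1} |α_μ|⁻¹)⁻¹ < |α_τ|`, and the LEC of the polygon is
collinear (every global minimizer has all `ψ_μ ∈ {0, π}`) iff `α₀ ≤ α_(c)`. -/
theorem collinear_lec_iff_le_critical (N : ℕ) (hN : 2 < N) (α : ℕ → ℝ)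
    (hα0 : 0 < α 0) (hαμ : ∀ μ ∈ Finset.Ico 1 N, α μ < 0)
    (τ : ℕ) (hτ : τ ∈ Finset.Ico 1 N)
    (hτmin : ∀ μ ∈ Finset.Ico 1 N, |α τ| ≤ |α μ|)
    (hreg : α 0 < |α τ|) :
    (∑ μ ∈ Finset.Ico 1 N, |α μ|⁻¹)⁻¹ < |α τ| ∧
    ((∀ ψ : ℕ → ℝ, (∀ μ ∈ Finset.Ico 1 N, ψ μ ∈ Set.Ioc (-π) π) →
        (∀ φ : ℕ → ℝ, (∀ μ ∈ Finset.Ico 1 N, φ μ ∈ Set.Ioc (-π) π) →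
          polygonEnergy N α ψ ≤ polygonEnergy N α φ) →
        ∀ μ ∈ Finset.Ico 1 N, ψ μ = 0 ∨ ψ μ = π) ↔
      α 0 ≤ (∑ μ ∈ Finset.Ico 1 N, |α μ|⁻¹)⁻¹) := by
  have hreg' : ∀ μ ∈ Ico 1 N, α 0 < -α μ := fun μ hμ =>
    (abs_of_neg (hαμ μ hμ)).symm ▸ hreg.trans_le (hτmin μ hμ)
  refine ⟨criticalCoupling_lt_abs hN (fun μ hμ => (hαμ μ hμ).ne) hτ, fun hcol => ?_,
    fun hcrit ψ hψ hmin μ hμ => ?_⟩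
  · by_contra! hcrit
    obtain ⟨φ, -, hφE⟩ := exists_polygonEnergy_lt_zero_of_criticalCoupling_lt (by omega) hαμ hcrit
    obtain ⟨ψ, hψ, hmin⟩ := exists_forall_polygonEnergy_le N α
    have hψcol := hcol ψ (fun μ _ => hψ μ) fun φ _ => hmin φ
    have := polygonEnergy_zero_le_of_collinear N hα0.le (fun μ hμ => (hreg' μ hμ).le) hψcol
    linarith [hmin φ]
  · refine .inl (by_contra fun hψμ => ?_)
    exact (polygonEnergy_zero_lt_of_le_criticalCoupling N hα0 hreg' hcrit hμ
      (sin_half_ne_zero (hψ μ hμ) hψμ)).not_ge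
      (hmin 0 fun _ _ => ⟨neg_lt_zero.2 pi_pos, pi_pos.le⟩)
end

section
/- Assume α_(c) < α_0 < |α_τ|, where |α_τ| := min_{0<μ<N} |α_μ| and α_(c) := (Σ_{μ=1}^{N−1} |α_μ|^{−1})^{−1}, and define f(Ψ) = Σ_{μ=1}^{N−1} arcsin((α_0/|α_μ|) sin Ψ) for Ψ ∈ [0, π]. Then the equation f(Ψ) = Ψ has exactly one solution Ψ in the open interval (0, π). -/
open Real Finset

/-!
Put `c_μ = α₀ / |α_μ| ∈ (0, 1)` and `g Ψ = Σ_μ arcsin (c_μ sin Ψ) - Ψ`. Each summand has second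
derivative `-c_μ (1 - c_μ²) sin Ψ / (1 - c_μ² sin² Ψ)^(3/2) < 0` on `(0, π)`, so `g` is strictly
concave on `[0, π]`. Moreover `g 0 = 0`, `g π = -π < 0` and `g' 0 = Σ_μ c_μ - 1 = α₀ / α_(c) - 1 > 0`,
so `g` is positive just after `0` and has a zero in `(0, π)`; a second one would give two equal
secant slopes from the zero at `0`, contradicting strict concavity.
-/

theorem StrictConcaveOn.finset_sum {𝕜 E β ι : Type*} [Semiring 𝕜] [PartialOrder 𝕜]
    [AddCommMonoid E] [AddCommMonoid β] [PartialOrder β] [IsOrderedCancelAddMonoid β]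
    [SMul 𝕜 E] [DistribMulAction 𝕜 β] {D : Set E} {t : Finset ι} {f : ι → E → β}
    (ht : t.Nonempty) (hf : ∀ i ∈ t, StrictConcaveOn 𝕜 D (f i)) :
    StrictConcaveOn 𝕜 D (fun x => ∑ i ∈ t, f i x) := by
  classical
  induction ht using Finset.Nonempty.cons_induction with
  | singleton i => simpa using hf i (mem_singleton_self i)
  | cons i t hi _ ih =>
    simp only [sum_cons]
    exact (hf i (mem_cons_self i t)).add (ih fun j hj => hf j (mem_cons_of_mem hj))

theorem StrictConcaveOn.existsUnique_zero_Ioo {g : ℝ → ℝ} {a b d : ℝ} (hab : a < b)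
    (hconc : StrictConcaveOn ℝ (Set.Icc a b) g) (hcont : ContinuousOn g (Set.Icc a b))
    (hga : g a = 0) (hd : HasDerivWithinAt g d (Set.Ioi a) a) (hd_pos : 0 < d) (hgb : g b < 0) :
    ∃! x, x ∈ Set.Ioo a b ∧ g x = 0 := by
  have hslope : ∀ᶠ x in nhdsWithin a (Set.Ioi a), 0 < slope g a x ∧ x ∈ Set.Ioo a b :=
    ((hasDerivWithinAt_iff_tendsto_slope' (lt_irrefl a)).1 hd |>.eventually
      (eventually_gt_nhds hd_pos)).and (Ioo_mem_nhdsGT hab)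
  obtain ⟨x₀, hslope₀, hx₀⟩ := hslope.exists
  obtain ⟨x, hx, hgx⟩ : ∃ x ∈ Set.Ioo x₀ b, g x = 0 :=
    intermediate_value_Ioo' hx₀.2.le (hcont.mono (Set.Icc_subset_Icc_left hx₀.1.le))
      ⟨hgb, pos_of_slope_pos hx₀.1 hslope₀ hga⟩
  have no_two_zeros : ∀ y z, y ∈ Set.Ioo a b → z ∈ Set.Ioo a b → g y = 0 → g z = 0 → ¬ y < z :=
    fun y z hy hz hgy hgz hyz => by
      have := hconc.slope_anti_adjacent (Set.left_mem_Icc.2 hab.le)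
        (Set.Ioo_subset_Icc_self hz) hy.1 hyz
      simp [hga, hgy, hgz] at this
  have hx' : x ∈ Set.Ioo a b := ⟨hx₀.1.trans hx.1, hx.2⟩
  refine ⟨x, ⟨hx', hgx⟩, fun y ⟨hy, hgy⟩ => ?_⟩
  exact le_antisymm (not_lt.1 (no_two_zeros x y hx' hy hgx hgy))
    (not_lt.1 (no_two_zeros y x hy hx' hgy hgx))

theorem sq_mul_sin_lt_one {c : ℝ} (hc : |c| < 1) (x : ℝ) : (c * sin x) ^ 2 < 1 := by
  rw [sq_lt_one_iff_abs_lt_one, abs_mul]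
  exact (mul_le_of_le_one_right (abs_nonneg c) (abs_sin_le_one x)).trans_lt hc

theorem hasDerivAt_arcsin_mul_sin {c : ℝ} (hc : |c| < 1) (x : ℝ) :
    HasDerivAt (fun t => arcsin (c * sin t)) (c * cos x / √(1 - (c * sin x) ^ 2)) x := by
  have hlt := abs_lt.1 ((sq_lt_one_iff_abs_lt_one _).1 (sq_mul_sin_lt_one hc x))
  refine ((hasDerivAt_arcsin hlt.1.ne' hlt.2.ne).comp x
    ((hasDerivAt_sin x).const_mul c)).congr_deriv ?_
  ring

theorem hasDerivAt_mul_cos_div_sqrt {c : ℝ} (hc : |c| < 1) (x : ℝ) :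
    HasDerivAt (fun t => c * cos t / √(1 - (c * sin t) ^ 2))
      (-(c * (1 - c ^ 2) * sin x) / √(1 - (c * sin x) ^ 2) ^ 3) x := by
  have hu : 0 < 1 - (c * sin x) ^ 2 := sub_pos.2 (sq_mul_sin_lt_one hc x)
  have hsqrt : √(1 - (c * sin x) ^ 2) ^ 2 = 1 - (c * sin x) ^ 2 := sq_sqrt hu.le
  have hr : 0 < √(1 - (c * sin x) ^ 2) := sqrt_pos.2 hu
  have hden : HasDerivAt (fun t => √(1 - (c * sin t) ^ 2))
      (-(2 * (c * sin x) * (c * cos x)) / (2 * √(1 - (c * sin x) ^ 2))) x := by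
    refine HasDerivAt.sqrt ?_ hu.ne'
    refine ((((hasDerivAt_sin x).const_mul c).pow 2).const_sub 1).congr_deriv ?_
    ring
  refine (((hasDerivAt_cos x).const_mul c).div hden hr.ne').congr_deriv ?_
  generalize √(1 - (c * sin x) ^ 2) = r at hr hsqrt
  field_simp
  linear_combination (-(c * sin x)) * hsqrt + c ^ 3 * sin x * sin_sq_add_cos_sq x

theorem strictConcaveOn_arcsin_mul_sin {c : ℝ} (hc0 : 0 < c) (hc1 : c < 1) :
    StrictConcaveOn ℝ (Set.Icc 0 π) (fun t => arcsin (c * sin t)) := by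
  have hc : |c| < 1 := by rwa [abs_of_pos hc0]
  have hderiv :
      deriv (fun t => arcsin (c * sin t)) = fun t => c * cos t / √(1 - (c * sin t) ^ 2) :=
    funext fun x => (hasDerivAt_arcsin_mul_sin hc x).deriv
  refine strictConcaveOn_of_deriv2_neg (convex_Icc 0 π) (by fun_prop) fun x hx => ?_
  rw [interior_Icc] at hx
  rw [Function.iterate_succ_apply, Function.iterate_one, hderiv,
    (hasDerivAt_mul_cos_div_sqrt hc x).deriv]
  have hsin : 0 < sin x := sin_pos_of_pos_of_lt_pi hx.1 hx.2
  have hc2 : 0 < 1 - c ^ 2 := by nlinarith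
  have hr : 0 < √(1 - (c * sin x) ^ 2) := sqrt_pos.2 (sub_pos.2 (sq_mul_sin_lt_one hc x))
  exact div_neg_of_neg_of_pos (neg_neg_of_pos (by positivity)) (by positivity)

/-- For `α_(c) < α₀ < |α_τ|` the fixed point equation
`Ψ = Σ_{μ=1}^{N−1} arcsin((α₀/|α_μ|) sin Ψ)` has exactly one solution in `(0, π)`. -/
theorem fixed_point_unique (N : ℕ) (hN : 2 < N)
    (α : ℕ → ℝ) (hα0 : 0 < α 0) (hαμ : ∀ μ ∈ Finset.Ico 1 N, α μ < 0)
    (hreg : ∀ μ ∈ Finset.Ico 1 N, α 0 < |α μ|)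
    (hcrit : (∑ μ ∈ Finset.Ico 1 N, |α μ|⁻¹)⁻¹ < α 0) :
    ∃! Ψ : ℝ, Ψ ∈ Set.Ioo (0 : ℝ) π ∧
      (∑ μ ∈ Finset.Ico 1 N, Real.arcsin ((α 0 / |α μ|) * Real.sin Ψ)) = Ψ := by
  have hne : (Ico 1 N).Nonempty := nonempty_Ico.2 (by omega)
  have habs : ∀ μ ∈ Ico 1 N, 0 < |α μ| := fun μ hμ => abs_pos.2 (hαμ μ hμ).ne
  have hc0 : ∀ μ ∈ Ico 1 N, 0 < α 0 / |α μ| := fun μ hμ => div_pos hα0 (habs μ hμ)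
  have hc1 : ∀ μ ∈ Ico 1 N, α 0 / |α μ| < 1 := fun μ hμ => (div_lt_one (habs μ hμ)).2 (hreg μ hμ)
  have hsum : 1 < ∑ μ ∈ Ico 1 N, α 0 / |α μ| := by
    simp_rw [div_eq_mul_inv, ← mul_sum]
    exact (inv_lt_iff_one_lt_mul₀ (sum_pos (fun μ hμ => inv_pos.2 (habs μ hμ)) hne)).1 hcrit
  set g : ℝ → ℝ := fun Ψ => ∑ μ ∈ Ico 1 N, arcsin (α 0 / |α μ| * sin Ψ) - Ψ
  have hderiv : ∀ x, HasDerivAt g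
      (∑ μ ∈ Ico 1 N, α 0 / |α μ| * cos x / √(1 - (α 0 / |α μ| * sin x) ^ 2) - 1) x :=
    fun x => (HasDerivAt.fun_sum fun μ hμ => hasDerivAt_arcsin_mul_sin
      (by rw [abs_of_pos (hc0 μ hμ)]; exact hc1 μ hμ) x).sub (hasDerivAt_id x)
  have hconc : StrictConcaveOn ℝ (Set.Icc 0 π) g :=
    (StrictConcaveOn.finset_sum hne fun μ hμ =>
      strictConcaveOn_arcsin_mul_sin (hc0 μ hμ) (hc1 μ hμ)).sub_convexOn
      (convexOn_id (convex_Icc 0 π))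
  have hzero := hconc.existsUnique_zero_Ioo pi_pos
    (continuous_iff_continuousAt.2 fun x => (hderiv x).continuousAt).continuousOn
    (by simp [g]) (hderiv 0).hasDerivWithinAt (by simpa using hsum) (by simp [g, pi_pos])
  simpa [g, sub_eq_zero] using hzero
end
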